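/- Let T be a bounded linear operator on a complex Hilbert space H and c > 0. Then w(T)⁴ ≤ ((1+2c)/(8(1+c)))·‖|T|⁴ + |T*|⁴‖ + ((3+2c)/(8(1+c)))·‖|T|² + |T*|²‖·w(T²), and the right-hand side is at most (1/2)·‖|T|⁴ + |T*|⁴‖. -/

import Mathlib

open scoped InnerProductSpace
open ContinuousLinearMap Finset

variable {H : Type*} [NormedAddCommGroup H] [InnerProductSpace ℂ H] [CompleteSpace H]

/-- The numerical radius of a bounded operator. -/
noncomputable def numRadius (T : H →L[ℂ] H) : ℝ :=
  sSup ((fun x : H => ‖⟪T x, x⟫_ℂ‖) '' {x : H | ‖x‖ = 1})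

/-- The absolute value |T| = (T*T)^(1/2). -/
noncomputable def opAbs (T : H →L[ℂ] H) : H →L[ℂ] H :=
  CFC.sqrt (ContinuousLinearMap.adjoint T * T)

/-- Real power of a (positive) operator via continuous functional calculus. -/
noncomputable def opPow (T : H →L[ℂ] H) (r : ℝ) : H →L[ℂ] H :=
  CFC.rpow T r

private lemma numRadius_nonneg (T : H →L[ℂ] H) : 0 ≤ numRadius T :=
  Real.sSup_nonneg (by rintro y ⟨x, hx, rfl⟩; positivity)

private lemma numRadius_le (T : H →L[ℂ] H) {a : ℝ} (ha : 0 ≤ a)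
    (h : ∀ x : H, ‖x‖ = 1 → ‖⟪T x, x⟫_ℂ‖ ≤ a) : numRadius T ≤ a :=
  Real.sSup_le (by rintro y ⟨x, hx, rfl⟩; exact h x hx) ha

private lemma le_numRadius (T : H →L[ℂ] H) {x : H} (hx : ‖x‖ = 1) :
    ‖⟪T x, x⟫_ℂ‖ ≤ numRadius T := by
  apply le_csSup
  · refine ⟨‖T‖, ?_⟩
    rintro y ⟨z, hz, rfl⟩
    simp only [Set.mem_setOf_eq] at hz
    calc ‖⟪T z, z⟫_ℂ‖ ≤ ‖T z‖ * ‖z‖ := norm_inner_le_norm _ _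
      _ ≤ ‖T‖ * ‖z‖ * ‖z‖ := by gcongr; exact T.le_opNorm z
      _ = ‖T‖ := by rw [hz]; ring
  · exact ⟨x, hx, rfl⟩

private lemma buzano {a b e : H} (he : ‖e‖ = 1) :
    ‖⟪a, e⟫_ℂ * ⟪e, b⟫_ℂ‖ ≤ (‖a‖ * ‖b‖ + ‖⟪a, b⟫_ℂ‖) / 2 := by
  set u : H := (2 * ⟪e, b⟫_ℂ) • e with hu
  have h1 : ‖u - b‖ = ‖b‖ := by
    have hsq : ‖u - b‖ ^ 2 = ‖b‖ ^ 2 := by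
      rw [norm_sub_sq (𝕜 := ℂ)]
      have hnu : ‖u‖ = 2 * ‖⟪e, b⟫_ℂ‖ := by
        rw [hu, norm_smul, he, mul_one, norm_mul]
        norm_num
      have hib : ⟪u, b⟫_ℂ = 2 * ((‖⟪e, b⟫_ℂ‖ : ℝ) : ℂ) ^ 2 := by
        rw [hu, inner_smul_left, map_mul]
        rw [map_ofNat (starRingEnd ℂ) 2]
        rw [mul_assoc, RCLike.conj_mul]
        push_cast
        ring_nf
        rfl
      have hre : RCLike.re ⟪u, b⟫_ℂ = 2 * ‖⟪e, b⟫_ℂ‖ ^ 2 := by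
        rw [hib]
        norm_cast
      rw [hnu, hre]; ring
    have := abs_eq_abs.mpr (Or.inl hsq)
    nlinarith [norm_nonneg (u - b), norm_nonneg b]
  have h2 : ⟪a, u - b⟫_ℂ = 2 * ⟪e, b⟫_ℂ * ⟪a, e⟫_ℂ - ⟪a, b⟫_ℂ := by
    rw [inner_sub_right, inner_smul_right]
  have h3 : ‖(2 : ℂ) * ⟪e, b⟫_ℂ * ⟪a, e⟫_ℂ - ⟪a, b⟫_ℂ‖ ≤ ‖a‖ * ‖b‖ := by
    rw [← h2]
    calc ‖⟪a, u - b⟫_ℂ‖ ≤ ‖a‖ * ‖u - b‖ := norm_inner_le_norm _ _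
      _ = ‖a‖ * ‖b‖ := by rw [h1]
  have h4 : ‖(2 : ℂ) * ⟪e, b⟫_ℂ * ⟪a, e⟫_ℂ‖ ≤ ‖a‖ * ‖b‖ + ‖⟪a, b⟫_ℂ‖ := by
    calc ‖(2 : ℂ) * ⟪e, b⟫_ℂ * ⟪a, e⟫_ℂ‖
        ≤ ‖(2 : ℂ) * ⟪e, b⟫_ℂ * ⟪a, e⟫_ℂ - ⟪a, b⟫_ℂ‖ + ‖⟪a, b⟫_ℂ‖ := by
          calc ‖(2 : ℂ) * ⟪e, b⟫_ℂ * ⟪a, e⟫_ℂ‖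
              = ‖(2 : ℂ) * ⟪e, b⟫_ℂ * ⟪a, e⟫_ℂ - ⟪a, b⟫_ℂ + ⟪a, b⟫_ℂ‖ := by
                rw [sub_add_cancel]
            _ ≤ ‖(2 : ℂ) * ⟪e, b⟫_ℂ * ⟪a, e⟫_ℂ - ⟪a, b⟫_ℂ‖ + ‖⟪a, b⟫_ℂ‖ := norm_add_le _ _
      _ ≤ ‖a‖ * ‖b‖ + ‖⟪a, b⟫_ℂ‖ := by linarith
  have h5 : ‖(2 : ℂ) * ⟪e, b⟫_ℂ * ⟪a, e⟫_ℂ‖ = 2 * ‖⟪a, e⟫_ℂ * ⟪e, b⟫_ℂ‖ := by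
    rw [norm_mul, norm_mul, norm_mul]; simp; ring
  linarith [h5 ▸ h4]

private lemma arith1 (c A B u W : ℝ) (hc : 0 < c) (hA : 0 ≤ A) (hB : 0 ≤ B) (hu : 0 ≤ u)
    (hW : 0 ≤ W) (hW2 : W ^ 2 ≤ B / 4 + u / 2) (huB : u ≤ B / 2) (hB2A : B ^ 2 ≤ 2 * A) :
    W ^ 4 ≤ (1 + 2 * c) / (8 * (1 + c)) * A + (3 + 2 * c) / (8 * (1 + c)) * (B * u) := by
  have hD : (0 : ℝ) < 8 * (1 + c) := by linarith
  rw [div_mul_eq_mul_div, div_mul_eq_mul_div, ← add_div, le_div_iff₀ hD]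
  have hW4 : W ^ 4 ≤ (B / 4 + u / 2) ^ 2 := by
    calc W ^ 4 = (W ^ 2) ^ 2 := by ring
      _ ≤ (B / 4 + u / 2) ^ 2 := pow_le_pow_left₀ (sq_nonneg W) hW2 2
  have t1 : u * u ≤ u * (B / 2) := mul_le_mul_of_nonneg_left huB hu
  have t2 : u * u ≤ (B / 2) * (B / 2) := mul_le_mul huB huB hu (by linarith)
  have t3 : c * (u * u) ≤ c * ((B / 2) * (B / 2)) := mul_le_mul_of_nonneg_left t2 hc.le
  have t4 : c * (B ^ 2) ≤ c * (2 * A) := mul_le_mul_of_nonneg_left hB2A hc.le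
  have t5 : c * (u * u) ≤ c * (u * (B / 2)) := mul_le_mul_of_nonneg_left t1 hc.le
  have e1 : (8 * (1 + c)) * W ^ 4 ≤ (8 * (1 + c)) * (B / 4 + u / 2) ^ 2 :=
    mul_le_mul_of_nonneg_left hW4 hD.le
  nlinarith [e1, t1, t3, t4, t5, hB2A, mul_nonneg hB hu, mul_nonneg hc.le (mul_nonneg hB hu)]

private lemma arith2 (c A B u : ℝ) (hc : 0 < c) (hA : 0 ≤ A) (hB : 0 ≤ B) (hu : 0 ≤ u)
    (huB : u ≤ B / 2) (hB2A : B ^ 2 ≤ 2 * A) :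
    (1 + 2 * c) / (8 * (1 + c)) * A + (3 + 2 * c) / (8 * (1 + c)) * (B * u)
      ≤ (1 / 2) * A := by
  have hD : (0 : ℝ) < 8 * (1 + c) := by linarith
  rw [div_mul_eq_mul_div, div_mul_eq_mul_div, ← add_div, div_le_iff₀ hD]
  have t5 : u * B ≤ (B / 2) * B := mul_le_mul_of_nonneg_right huB hB
  have t6 : c * (u * B) ≤ c * ((B / 2) * B) := mul_le_mul_of_nonneg_left t5 hc.le
  have t4 : c * (B ^ 2) ≤ c * (2 * A) := mul_le_mul_of_nonneg_left hB2A hc.le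
  nlinarith [t5, t6, t4, hB2A]

set_option maxHeartbeats 1000000 in
private lemma opAbs_sq (T : H →L[ℂ] H) : opAbs T ^ 2 = adjoint T * T := by
  have h : (0 : H →L[ℂ] H) ≤ adjoint T * T := by
    simpa [star_eq_adjoint] using star_mul_self_nonneg T
  exact CFC.sq_sqrt _ h

set_option maxHeartbeats 2000000 in
theorem stmt19 (T : H →L[ℂ] H) (c : ℝ) (hc : 0 < c) :
    numRadius T ^ 4
      ≤ (1 + 2 * c) / (8 * (1 + c)) * ‖opAbs T ^ 4 + opAbs (adjoint T) ^ 4‖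
        + (3 + 2 * c) / (8 * (1 + c))
          * (‖opAbs T ^ 2 + opAbs (adjoint T) ^ 2‖ * numRadius (T ^ 2)) ∧
    (1 + 2 * c) / (8 * (1 + c)) * ‖opAbs T ^ 4 + opAbs (adjoint T) ^ 4‖
        + (3 + 2 * c) / (8 * (1 + c))
          * (‖opAbs T ^ 2 + opAbs (adjoint T) ^ 2‖ * numRadius (T ^ 2))
      ≤ (1 / 2) * ‖opAbs T ^ 4 + opAbs (adjoint T) ^ 4‖ := by
  set P : H →L[ℂ] H := adjoint T * T with hPdef
  set Q : H →L[ℂ] H := T * adjoint T with hQdef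
  have hP2 : opAbs T ^ 2 = P := opAbs_sq T
  have hQ2 : opAbs (adjoint T) ^ 2 = Q := by
    rw [opAbs_sq (adjoint T), adjoint_adjoint]
  have hP4 : opAbs T ^ 4 = P ^ 2 := by rw [show (4:ℕ) = 2*2 from rfl, pow_mul, hP2]
  have hQ4 : opAbs (adjoint T) ^ 4 = Q ^ 2 := by
    rw [show (4:ℕ) = 2*2 from rfl, pow_mul, hQ2]
  rw [hP2, hQ2, hP4, hQ4]
  set B : ℝ := ‖P + Q‖ with hBdef
  set A : ℝ := ‖P ^ 2 + Q ^ 2‖ with hAdef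
  set u : ℝ := numRadius (T ^ 2) with hudef
  set W : ℝ := numRadius T with hWdef
  have hA : 0 ≤ A := norm_nonneg _
  have hB : 0 ≤ B := norm_nonneg _
  have hu : 0 ≤ u := numRadius_nonneg _
  have hW : 0 ≤ W := numRadius_nonneg _
  -- pointwise bound on ‖Tx‖² + ‖T*x‖²
  have hpt : ∀ x : H, ‖x‖ = 1 → ‖T x‖ ^ 2 + ‖adjoint T x‖ ^ 2 ≤ B := by
    intro x hx
    have e1 : ⟪P x, x⟫_ℂ = ((‖T x‖ : ℂ)) ^ 2 := by
      rw [hPdef, ContinuousLinearMap.mul_apply, adjoint_inner_left, inner_self_eq_norm_sq_to_K]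
      rfl
    have e2 : ⟪Q x, x⟫_ℂ = ((‖adjoint T x‖ : ℂ)) ^ 2 := by
      rw [hQdef, ContinuousLinearMap.mul_apply, ← adjoint_inner_right,
        inner_self_eq_norm_sq_to_K]
      rfl
    have h1 : ⟪(P + Q) x, x⟫_ℂ = ((‖T x‖ ^ 2 + ‖adjoint T x‖ ^ 2 : ℝ) : ℂ) := by
      rw [ContinuousLinearMap.add_apply, inner_add_left, e1, e2]
      push_cast
      ring
    have h2 : ‖⟪(P + Q) x, x⟫_ℂ‖ ≤ B := by
      calc ‖⟪(P + Q) x, x⟫_ℂ‖ ≤ ‖(P + Q) x‖ * ‖x‖ := norm_inner_le_norm _ _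
        _ ≤ B * ‖x‖ * ‖x‖ := by gcongr; exact (P + Q).le_opNorm x
        _ = B := by rw [hx]; ring
    rw [h1] at h2
    rwa [Complex.norm_real, Real.norm_eq_abs, abs_of_nonneg (by positivity)] at h2
  -- inner product identity for T²
  have hT2 : ∀ x : H, ⟪(T ^ 2) x, x⟫_ℂ = ⟪T x, adjoint T x⟫_ℂ := by
    intro x
    rw [pow_two, ContinuousLinearMap.mul_apply, ← adjoint_inner_right]
  -- w(T²) ≤ B/2
  have huB : u ≤ B / 2 := by
    refine numRadius_le _ (by positivity) fun x hx => ?_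
    rw [hT2 x]
    calc ‖⟪T x, adjoint T x⟫_ℂ‖ ≤ ‖T x‖ * ‖adjoint T x‖ := norm_inner_le_norm _ _
      _ ≤ (‖T x‖ ^ 2 + ‖adjoint T x‖ ^ 2) / 2 := by nlinarith [sq_nonneg (‖T x‖ - ‖adjoint T x‖)]
      _ ≤ B / 2 := by linarith [hpt x hx]
  -- W² ≤ B/4 + u/2
  have hW2 : W ^ 2 ≤ B / 4 + u / 2 := by
    have hsqrt : W ≤ Real.sqrt (B / 4 + u / 2) := by
      refine numRadius_le _ (Real.sqrt_nonneg _) fun x hx => ?_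
      rw [Real.le_sqrt (norm_nonneg _) (by positivity)]
      have hxe : ⟪x, adjoint T x⟫_ℂ = ⟪T x, x⟫_ℂ := adjoint_inner_right T x x
      have hb := buzano (a := T x) (b := adjoint T x) (e := x) hx
      rw [hxe] at hb
      have hkey : ‖⟪T x, x⟫_ℂ‖ ^ 2 = ‖⟪T x, x⟫_ℂ * ⟪T x, x⟫_ℂ‖ := by
        rw [norm_mul]; ring
      have hTT : ‖⟪T x, adjoint T x⟫_ℂ‖ ≤ u := by
        rw [← hT2 x]; exact le_numRadius _ hx
      have hab : ‖T x‖ * ‖adjoint T x‖ ≤ B / 2 := by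
        nlinarith [sq_nonneg (‖T x‖ - ‖adjoint T x‖), hpt x hx]
      calc ‖⟪T x, x⟫_ℂ‖ ^ 2 = ‖⟪T x, x⟫_ℂ * ⟪T x, x⟫_ℂ‖ := hkey
        _ ≤ (‖T x‖ * ‖adjoint T x‖ + ‖⟪T x, adjoint T x⟫_ℂ‖) / 2 := hb
        _ ≤ (B / 2 + u) / 2 := by linarith
        _ = B / 4 + u / 2 := by ring
    calc W ^ 2 ≤ Real.sqrt (B / 4 + u / 2) ^ 2 := pow_le_pow_left₀ hW hsqrt 2
      _ = B / 4 + u / 2 := Real.sq_sqrt (by positivity)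
  -- B² ≤ 2A
  have hPsa : IsSelfAdjoint P := by
    rw [hPdef, IsSelfAdjoint, star_mul, star_eq_adjoint, star_eq_adjoint, adjoint_adjoint]
  have hQsa : IsSelfAdjoint Q := by
    rw [hQdef, IsSelfAdjoint, star_mul, star_eq_adjoint, star_eq_adjoint, adjoint_adjoint]
  have hB2A : B ^ 2 ≤ 2 * A := by
    have hSsa : IsSelfAdjoint (P + Q) := hPsa.add hQsa
    have h1 : ‖(P + Q) ^ 2‖ = B ^ 2 := by
      rw [sq, sq]
      nth_rewrite 1 [← hSsa.star_eq]
      rw [CStarRing.norm_star_mul_self]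
    have hposS : (0 : H →L[ℂ] H) ≤ (P + Q) ^ 2 := by
      have := star_mul_self_nonneg (P + Q)
      rwa [hSsa.star_eq, ← sq] at this
    have hle : (P + Q) ^ 2 ≤ P ^ 2 + Q ^ 2 + (P ^ 2 + Q ^ 2) := by
      rw [← sub_nonneg]
      have hd : P ^ 2 + Q ^ 2 + (P ^ 2 + Q ^ 2) - (P + Q) ^ 2 = star (P - Q) * (P - Q) := by
        rw [(hPsa.sub hQsa).star_eq]
        noncomm_ring
      rw [hd]
      exact star_mul_self_nonneg _
    have h2 : ‖(P + Q) ^ 2‖ ≤ ‖P ^ 2 + Q ^ 2 + (P ^ 2 + Q ^ 2)‖ :=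
      CStarAlgebra.norm_le_norm_of_nonneg_of_le hposS hle
    have h3 : ‖P ^ 2 + Q ^ 2 + (P ^ 2 + Q ^ 2)‖ ≤ 2 * A := by
      calc ‖P ^ 2 + Q ^ 2 + (P ^ 2 + Q ^ 2)‖ ≤ ‖P ^ 2 + Q ^ 2‖ + ‖P ^ 2 + Q ^ 2‖ :=
            norm_add_le _ _
        _ = 2 * A := by rw [hAdef]; ring
    calc B ^ 2 = ‖(P + Q) ^ 2‖ := h1.symm
      _ ≤ ‖P ^ 2 + Q ^ 2 + (P ^ 2 + Q ^ 2)‖ := h2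
      _ ≤ 2 * A := h3
  exact ⟨arith1 c A B u W hc hA hB hu hW hW2 huB hB2A,
    arith2 c A B u hc hA hB hu huB hB2A⟩
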